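/- arXiv:2405.01395 — 2 statements merged into one kernel-verified Lean document; each statement's English description precedes it below -/
import Mathlib

section
/- Let C be a d₁ × d₂ complex matrix with singular value decomposition C = V₁ [D; 0] V₂† (d₁ ≥ d₂, D a nonnegative d₂ × d₂ diagonal matrix). Define A = V₁ [[D,0],[0,0]] V₁ᵀ and B = conj(V₂) D V₂†. Then A and B are symmetric, and the symmetric block matrix S = [[A, C],[Cᵀ, B]] satisfies rank(S) = rank(C). -/
/-!
With `D = diagonal d`, `X = V₁ [1; 0]` (the first `d₂` columns of `V₁`) and `Y = conj V₂`, all four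
blocks are products `U D Vᵀ`: `A = X D Xᵀ`, `C = X D Yᵀ`, `B = Y D Yᵀ`, so `S = W D Wᵀ` with
`W = [X; Y]`. Hence `rank S ≤ rank D`, while the principal block `B` of `S` has rank `rank D` as `Y` is
invertible. Finally `rank C = rank D`, since `Yᵀ` is invertible and `X` has the left inverse `Xᴴ`.
-/

open Matrix

namespace Matrix

variable {m n k o R : Type*} [Fintype n]

theorem IsSymm.mul_mul_transpose [CommSemiring R] {D : Matrix n n R} (hD : D.IsSymm)
    (X : Matrix m n R) : (X * D * Xᵀ).IsSymm := by
  rw [IsSymm, transpose_mul, transpose_mul, transpose_transpose, hD.eq, Matrix.mul_assoc]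

theorem fromRows_mul_mul_transpose [CommSemiring R] (X : Matrix m n R) (Y : Matrix o n R)
    (D : Matrix n n R) :
    fromRows X Y * D * (fromRows X Y)ᵀ =
      fromBlocks (X * D * Xᵀ) (X * D * Yᵀ) (Y * D * Xᵀ) (Y * D * Yᵀ) := by
  rw [transpose_fromRows, fromRows_mul, fromRows_mul_fromCols]

theorem rank_mul_mul_transpose_le [CommRing R] [StrongRankCondition R] [Fintype m]
    (W : Matrix m n R) (D : Matrix n n R) : (W * D * Wᵀ).rank ≤ D.rank :=
  (rank_mul_le_left _ _).trans (rank_mul_le_right _ _)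

theorem rank_mul_eq_right_of_mul_eq_one [CommRing R] [StrongRankCondition R] [Fintype m]
    [Fintype k] [DecidableEq n]
    {L : Matrix n m R} {X : Matrix m n R} (hLX : L * X = 1) (M : Matrix n k R) :
    (X * M).rank = M.rank := by
  refine le_antisymm (rank_mul_le_right _ _) ?_
  calc M.rank = (L * (X * M)).rank := by rw [← Matrix.mul_assoc, hLX, Matrix.one_mul]
    _ ≤ (X * M).rank := rank_mul_le_right _ _

theorem rank_fromRows_mul_mul_transpose_of_isUnit_det [CommRing R] [StrongRankCondition R]
    [Fintype m] [DecidableEq n] (X : Matrix m n R) {Y : Matrix n n R} (hY : IsUnit Y.det)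
    (D : Matrix n n R) : (fromRows X Y * D * (fromRows X Y)ᵀ).rank = D.rank := by
  refine le_antisymm (rank_mul_mul_transpose_le _ _) ?_
  have hYT : IsUnit Yᵀ.det := by rwa [det_transpose]
  calc D.rank = (Y * D * Yᵀ).rank := by
        rw [rank_mul_eq_left_of_isUnit_det _ _ hYT, rank_mul_eq_right_of_isUnit_det _ _ hY]
    _ = (fromRows X Y * D * (fromRows X Y)ᵀ).toBlocks₂₂.rank := by
        rw [fromRows_mul_mul_transpose, toBlocks_fromBlocks₂₂]
    _ ≤ _ := rank_submatrix_le _ Sum.inr Sum.inr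

theorem conjTranspose_mul_self_of_mem_unitaryGroup_mul_fromRows [CommRing R] [StarRing R]
    [Fintype k] [DecidableEq n] [DecidableEq k] {U : Matrix (n ⊕ k) (n ⊕ k) R}
    (hU : U ∈ unitaryGroup (n ⊕ k) R) :
    (U * fromRows (1 : Matrix n n R) (0 : Matrix k n R))ᴴ *
      (U * fromRows (1 : Matrix n n R) (0 : Matrix k n R)) = 1 := by
  rw [conjTranspose_mul, Matrix.mul_assoc, ← Matrix.mul_assoc Uᴴ, ← star_eq_conjTranspose,
    mem_unitaryGroup_iff'.mp hU, Matrix.one_mul, conjTranspose_fromRows_eq_fromCols_conjTranspose,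
    fromCols_mul_fromRows]
  simp

end Matrix

theorem rank_padded_block_eq_rank_general {d₂ e : ℕ}
    (V₁ : Matrix (Fin d₂ ⊕ Fin e) (Fin d₂ ⊕ Fin e) ℂ)
    (hV₁ : V₁ ∈ Matrix.unitaryGroup (Fin d₂ ⊕ Fin e) ℂ)
    (V₂ : Matrix (Fin d₂) (Fin d₂) ℂ)
    (hV₂ : V₂ ∈ Matrix.unitaryGroup (Fin d₂) ℂ)
    (d : Fin d₂ → ℝ)
    (C : Matrix (Fin d₂ ⊕ Fin e) (Fin d₂) ℂ)
    (hC : C = V₁ * Matrix.fromRows (Matrix.diagonal (fun i => (d i : ℂ))) (0 : Matrix (Fin e) (Fin d₂) ℂ) * V₂ᴴ)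
    (A : Matrix (Fin d₂ ⊕ Fin e) (Fin d₂ ⊕ Fin e) ℂ)
    (hA : A = V₁ * Matrix.fromBlocks (Matrix.diagonal (fun i => (d i : ℂ))) 0 0 0 * V₁ᵀ)
    (B : Matrix (Fin d₂) (Fin d₂) ℂ)
    (hB : B = (V₂ᴴ)ᵀ * Matrix.diagonal (fun i => (d i : ℂ)) * V₂ᴴ) :
    Aᵀ = A ∧ Bᵀ = B ∧ (Matrix.fromBlocks A C Cᵀ B).rank = C.rank := by
  set D := diagonal fun i => (d i : ℂ)
  set P := fromRows (1 : Matrix (Fin d₂) (Fin d₂) ℂ) (0 : Matrix (Fin e) (Fin d₂) ℂ)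
  set X := V₁ * P
  set Y := (V₂ᴴ)ᵀ
  have hD : D.IsSymm := isSymm_diagonal _
  have hA' : A = X * D * Xᵀ := by
    have hPDP : P * D * Pᵀ = fromBlocks D 0 0 0 := by
      rw [fromRows_mul_mul_transpose]; simp
    rw [hA, ← hPDP, transpose_mul]
    simp only [X, Matrix.mul_assoc]
  have hC' : C = X * D * Yᵀ := by
    rw [hC, transpose_transpose]
    simp only [X, P, Matrix.mul_assoc, fromRows_mul, Matrix.one_mul, Matrix.zero_mul]
  have hB' : B = Y * D * Yᵀ := by rw [hB, transpose_transpose]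
  have hCT : Cᵀ = Y * D * Xᵀ := by
    rw [hC', transpose_mul, transpose_mul, transpose_transpose, hD.eq, Matrix.mul_assoc]
  have hY : IsUnit Y.det := by
    rw [det_transpose]
    exact isUnit_det_of_right_inverse (mem_unitaryGroup_iff'.mp hV₂)
  have hXisom : Xᴴ * X = 1 := conjTranspose_mul_self_of_mem_unitaryGroup_mul_fromRows hV₁
  refine ⟨hA' ▸ (hD.mul_mul_transpose X).eq, hB' ▸ (hD.mul_mul_transpose Y).eq, ?_⟩
  rw [hA', hCT, hC', hB', ← fromRows_mul_mul_transpose,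
    rank_fromRows_mul_mul_transpose_of_isUnit_det _ hY,
    rank_mul_eq_left_of_isUnit_det _ _ (by rwa [det_transpose]),
    rank_mul_eq_right_of_mul_eq_one hXisom]

/-- Rows of the first unitary are indexed by `Fin d₂ ⊕ Fin e`, i.e. `d₁ = d₂ + e ≥ d₂`. -/
theorem rank_padded_block_eq_rank {d₂ e : ℕ}
    (V₁ : Matrix (Fin d₂ ⊕ Fin e) (Fin d₂ ⊕ Fin e) ℂ)
    (hV₁ : V₁ ∈ Matrix.unitaryGroup (Fin d₂ ⊕ Fin e) ℂ)
    (V₂ : Matrix (Fin d₂) (Fin d₂) ℂ)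
    (hV₂ : V₂ ∈ Matrix.unitaryGroup (Fin d₂) ℂ)
    (d : Fin d₂ → ℝ) (hd : ∀ i, 0 ≤ d i)
    (C : Matrix (Fin d₂ ⊕ Fin e) (Fin d₂) ℂ)
    (hC : C = V₁ * Matrix.fromRows (Matrix.diagonal (fun i => (d i : ℂ))) (0 : Matrix (Fin e) (Fin d₂) ℂ) * V₂ᴴ)
    (A : Matrix (Fin d₂ ⊕ Fin e) (Fin d₂ ⊕ Fin e) ℂ)
    (hA : A = V₁ * Matrix.fromBlocks (Matrix.diagonal (fun i => (d i : ℂ))) 0 0 0 * V₁ᵀ)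
    (B : Matrix (Fin d₂) (Fin d₂) ℂ)
    (hB : B = (V₂ᴴ)ᵀ * Matrix.diagonal (fun i => (d i : ℂ)) * V₂ᴴ) :
    Aᵀ = A ∧ Bᵀ = B ∧ (Matrix.fromBlocks A C Cᵀ B).rank = C.rank :=
  rank_padded_block_eq_rank_general V₁ hV₁ V₂ hV₂ d C hC A hA B hB
end

section
/- Post-selected preparability implies the rank condition: if there exist a ∈ ℕ, a unitary U ∈ U(m + a), and α ∈ (0, 1] such that Uᵀ · diag(S_in, 0) · U has its top-left off-diagonal blocks equal to α·C and α·Cᵀ (at the positions of the two-qudit encoding), then 2·rank(C) ≤ 2·rank(S_in), i.e., rank(C) ≤ rank(S_in). -/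
/-! Since `U` is invertible, the congruence `Uᵀ · diag(S_in, 0) · U` has the rank of `S_in`;
`α • C` is one of its submatrices, and scaling by `α ≠ 0` does not change the rank. -/

open Matrix

namespace Matrix

variable {R : Type*} [CommRing R] {m n o : Type*} [Fintype m] [Fintype n] [Fintype o]

theorem rank_fromBlocks_zero_zero_zero [StrongRankCondition R] [DecidableEq n] (A : Matrix n n R) :
    (fromBlocks A 0 0 (0 : Matrix o o R)).rank = A.rank := by
  have hfactor : fromBlocks A 0 0 (0 : Matrix o o R) =
      fromRows (1 : Matrix n n R) (0 : Matrix o n R) * A *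
        fromCols (1 : Matrix n n R) (0 : Matrix n o R) := by
    rw [fromRows_mul, fromRows_mul_fromCols]
    simp
  refine le_antisymm ?_ (rank_submatrix_le (fromBlocks A 0 0 (0 : Matrix o o R)) Sum.inl Sum.inl)
  rw [hfactor]
  exact (rank_mul_le_left _ _).trans (rank_mul_le_right _ _)

theorem rank_transpose_mul_mul_of_isUnit_det [DecidableEq m] (M U : Matrix m m R)
    (hU : IsUnit U.det) : (Uᵀ * M * U).rank = M.rank := by
  rw [rank_mul_eq_left_of_isUnit_det U _ hU,
    rank_mul_eq_right_of_isUnit_det Uᵀ _ (by rwa [det_transpose])]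

end Matrix

theorem postselected_prep_rank_necessary_general {d₁ d₂ a : ℕ}
    (Sin : Matrix (Fin d₁ ⊕ Fin d₂) (Fin d₁ ⊕ Fin d₂) ℂ)
    (C : Matrix (Fin d₁) (Fin d₂) ℂ)
    (U : Matrix ((Fin d₁ ⊕ Fin d₂) ⊕ Fin a) ((Fin d₁ ⊕ Fin d₂) ⊕ Fin a) ℂ)
    (hU : U ∈ Matrix.unitaryGroup ((Fin d₁ ⊕ Fin d₂) ⊕ Fin a) ℂ)
    (α : ℝ) (hα : α ∈ Set.Ioc (0 : ℝ) 1)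
    (h : ∀ (i : Fin d₁) (j : Fin d₂),
      (Uᵀ * Matrix.fromBlocks Sin 0 0 (0 : Matrix (Fin a) (Fin a) ℂ) * U)
          (Sum.inl (Sum.inl i)) (Sum.inl (Sum.inr j)) = (α : ℂ) * C i j) :
    C.rank ≤ Sin.rank := by
  set M := Uᵀ * fromBlocks Sin 0 0 (0 : Matrix (Fin a) (Fin a) ℂ) * U
  have hα₀ : (α : ℂ) ≠ 0 := Complex.ofReal_ne_zero.mpr hα.1.ne'
  have hblock : (α : ℂ) • C = M.submatrix (Sum.inl ∘ Sum.inl) (Sum.inl ∘ Sum.inr) := by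
    ext i j
    exact (h i j).symm
  calc C.rank = ((α : ℂ) • C).rank :=
        (rank_smul_of_mem_nonZeroDivisors C (mem_nonZeroDivisors_of_ne_zero hα₀)).symm
    _ ≤ M.rank := hblock ▸ rank_submatrix_le M _ _
    _ = Sin.rank := by
      rw [rank_transpose_mul_mul_of_isUnit_det _ U (UnitaryGroup.det_isUnit ⟨U, hU⟩),
        rank_fromBlocks_zero_zero_zero]

theorem postselected_prep_rank_necessary {d₁ d₂ a : ℕ}
    (Sin : Matrix (Fin d₁ ⊕ Fin d₂) (Fin d₁ ⊕ Fin d₂) ℂ) (hSin : Sinᵀ = Sin)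
    (C : Matrix (Fin d₁) (Fin d₂) ℂ)
    (U : Matrix ((Fin d₁ ⊕ Fin d₂) ⊕ Fin a) ((Fin d₁ ⊕ Fin d₂) ⊕ Fin a) ℂ)
    (hU : U ∈ Matrix.unitaryGroup ((Fin d₁ ⊕ Fin d₂) ⊕ Fin a) ℂ)
    (α : ℝ) (hα : α ∈ Set.Ioc (0 : ℝ) 1)
    (h : ∀ (i : Fin d₁) (j : Fin d₂),
      (Uᵀ * Matrix.fromBlocks Sin 0 0 (0 : Matrix (Fin a) (Fin a) ℂ) * U)
          (Sum.inl (Sum.inl i)) (Sum.inl (Sum.inr j)) = (α : ℂ) * C i j) :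
    C.rank ≤ Sin.rank :=
  postselected_prep_rank_necessary_general Sin C U hU α hα h
end
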